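/- The operator φ_n = ε_ne ∘ δ_en is an (algebraic) closing on node weights: it is increasing (n ≤ n' implies φ_n n ≤ φ_n n'), extensive (n i ≤ (φ_n n) i for all vertices i), and idempotent (φ_n (φ_n n) = φ_n n). -/

import Mathlib

/-- The closing `φ_n = ε_ne ∘ δ_en` on node weights:
`(φ_n n) i` is the minimum over the neighbors `j` of `i` of `max (n i) (n j)`. -/
noncomputable def phiN {V : Type*} [Fintype V] (G : SimpleGraph V) [DecidableRel G.Adj]
    (h : ∀ i : V, ∃ j, G.Adj i j) (n : V → ℝ) (i : V) : ℝ :=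
  (G.neighborFinset i).inf'
    ⟨(h i).choose, by rw [SimpleGraph.mem_neighborFinset]; exact (h i).choose_spec⟩
    (fun j => max (n i) (n j))

namespace phiN

variable {V : Type*} [Fintype V] {G : SimpleGraph V} [DecidableRel G.Adj]
  {h : ∀ i : V, ∃ j, G.Adj i j} {n : V → ℝ} {i j : V}

theorem le_max_of_adj (hij : G.Adj i j) : phiN G h n i ≤ max (n i) (n j) :=
  Finset.inf'_le _ ((G.mem_neighborFinset i j).2 hij)

theorem le_iff {a : ℝ} : a ≤ phiN G h n i ↔ ∀ j, G.Adj i j → a ≤ max (n i) (n j) :=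
  (Finset.le_inf'_iff _ _).trans <| forall_congr' fun j => by rw [SimpleGraph.mem_neighborFinset]

theorem exists_adj_eq_max (n : V → ℝ) (i : V) :
    ∃ j, G.Adj i j ∧ phiN G h n i = max (n i) (n j) := by
  obtain ⟨j, hj, hmin⟩ := Finset.exists_mem_eq_inf' _ (fun j => max (n i) (n j))
  exact ⟨j, (G.mem_neighborFinset i j).1 hj, hmin⟩

theorem monotone : Monotone (phiN G h) := fun _ _ hle i =>
  le_iff.2 fun j hij => (le_max_of_adj hij).trans (max_le_max (hle i) (hle j))

theorem le_self (n : V → ℝ) : n ≤ phiN G h n := fun _ =>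
  le_iff.2 fun _ _ => le_max_left _ _

/-- If `j` realises the minimum at `i`, then `φ_n n` is at most `φ_n n i` at both ends of the
edge `ij`, so this edge already bounds `φ_n (φ_n n) i` by `φ_n n i`. -/
theorem phiN_phiN_le (n : V → ℝ) : phiN G h (phiN G h n) ≤ phiN G h n := by
  intro i
  obtain ⟨j, hij, hmin⟩ := exists_adj_eq_max (h := h) n i
  have hj : phiN G h n j ≤ phiN G h n i := by
    rw [hmin, max_comm]
    exact le_max_of_adj hij.symm
  calc phiN G h (phiN G h n) i ≤ max (phiN G h n i) (phiN G h n j) := le_max_of_adj hij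
    _ = phiN G h n i := max_eq_left hj

variable (G h) in
noncomputable def closureOperator : ClosureOperator (V → ℝ) :=
  ClosureOperator.mk' (phiN G h) monotone le_self phiN_phiN_le

end phiN

/-- The operator `φ_n = ε_ne ∘ δ_en` is an algebraic closing on node weights:
it is increasing, extensive and idempotent. -/
theorem phiN_is_closing {V : Type*} [Fintype V] (G : SimpleGraph V)
    [DecidableRel G.Adj] (h : ∀ i : V, ∃ j, G.Adj i j) :
    (∀ n n' : V → ℝ, (∀ i, n i ≤ n' i) → ∀ i, phiN G h n i ≤ phiN G h n' i) ∧
    (∀ n : V → ℝ, ∀ i, n i ≤ phiN G h n i) ∧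
    (∀ n : V → ℝ, phiN G h (phiN G h n) = phiN G h n) :=
  let c := phiN.closureOperator G h
  ⟨fun _ _ hle => c.monotone hle, c.le_closure, c.idempotent⟩
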